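/- For every real p > 2 there exist a positive integer d, an integer n ≥ 2, and distinct points x¹, …, xⁿ ∈ ℝ^d such that the p-norm distance matrix (‖xⁱ − xʲ‖_p)_{i,j=1}^n is singular. -/

import Mathlib

/-- The `p`-norm `‖x‖_p = (∑ |x_k|^p)^(1/p)` on `ℝ^d`. -/
noncomputable def pNorm {d : ℕ} (p : ℝ) (x : Fin d → ℝ) : ℝ :=
  (∑ k, |x k| ^ p) ^ (1 / p)

/-!
Take two orthogonal Hamming cubes, `{±1}^N × 0` and `0 × t{±1}^N`. Inside a cube the `p`-distance
is a function of the Hamming distance, and all cross distances equal `E = (N + N t^p)^{1/p}`. Hence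
each diagonal block of the distance matrix has constant row sums (`2S` and `2tS`, where
`S = ∑_u ‖u‖_H^{1/p}`), and a vector constant on each cube is in the kernel once
`4 t S² = 4^N E²`. By the intermediate value theorem such a `t > 0` exists as soon as
`2S > 2^N (2N)^{1/p}`. The Hamming weight concentrates at `N/2` (Chebyshev), so
`S ≈ 2^N (N/2)^{1/p}`, and `(N/2)^{1/p} > (2N)^{1/p} / 2` says exactly `4^{1/p} < 2`, i.e. `p > 2`.
-/

open Finset

lemma ZMod.two_eq_zero_or_eq_one (a : ZMod 2) : a = 0 ∨ a = 1 := by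
  revert a; decide

/-- Vertices of `{±1}^N` are indexed by `(ZMod 2)^N`, on which the Hamming distance is
translation invariant. -/
def spin (a : ZMod 2) : ℝ := if a = 0 then 1 else -1

lemma spin_add_one (a : ZMod 2) : spin (a + 1) = -spin a := by
  rcases a.two_eq_zero_or_eq_one with rfl | rfl <;> simp [spin]
  decide

lemma spin_mul_self (a : ZMod 2) : spin a * spin a = 1 := by
  rcases a.two_eq_zero_or_eq_one with rfl | rfl <;> simp [spin]

lemma abs_spin (a : ZMod 2) : |spin a| = 1 := by
  rcases a.two_eq_zero_or_eq_one with rfl | rfl <;> simp [spin]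

lemma abs_spin_sub_spin_rpow {p : ℝ} (hp : p ≠ 0) (a b : ZMod 2) :
    |spin a - spin b| ^ p = if a = b then 0 else 2 ^ p := by
  rcases a.two_eq_zero_or_eq_one with rfl | rfl <;>
    rcases b.two_eq_zero_or_eq_one with rfl | rfl <;> norm_num [spin, Real.zero_rpow hp]

lemma spin_eq_one_sub_two_mul (a : ZMod 2) : spin a = 1 - 2 * if a ≠ 0 then 1 else 0 := by
  rcases a.two_eq_zero_or_eq_one with rfl | rfl <;> norm_num [spin]

lemma spin_injective : Function.Injective spin := by
  intro a b h
  rcases a.two_eq_zero_or_eq_one with rfl | rfl <;>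
    rcases b.two_eq_zero_or_eq_one with rfl | rfl <;> first | rfl | norm_num [spin] at h

lemma spin_ne_zero (a : ZMod 2) : spin a ≠ 0 := by
  rcases a.two_eq_zero_or_eq_one with rfl | rfl <;> norm_num [spin]

section HammingCube

variable {ι : Type*} [Fintype ι]

lemma sum_spin (u : ι → ZMod 2) :
    ∑ i, spin (u i) = Fintype.card ι - 2 * hammingNorm u := by
  simp_rw [spin_eq_one_sub_two_mul, sum_sub_distrib, ← mul_sum, sum_boole]
  simp [hammingNorm]

lemma sum_hammingDist_left [DecidableEq ι] {G M : Type*} [AddGroup G] [DecidableEq G] [Fintype G]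
    [AddCommMonoid M] (F : ℕ → M) (x : ι → G) :
    ∑ y : ι → G, F (hammingDist x y) = ∑ u : ι → G, F (hammingNorm u) :=
  Fintype.sum_equiv (Equiv.addLeft (-x)) _ _ fun y => by
    rw [hammingDist_eq_hammingNorm, Equiv.coe_addLeft]

lemma sum_spin_mul_spin [DecidableEq ι] (i j : ι) :
    ∑ u : ι → ZMod 2, spin (u i) * spin (u j) = if i = j then 2 ^ Fintype.card ι else 0 := by
  split_ifs with hij
  · subst hij
    simp [spin_mul_self, ZMod.card]
  · have h := Fintype.sum_equiv (Equiv.addRight (Pi.single i 1))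
      (fun u : ι → ZMod 2 => spin (u i) * spin (u j))
      (fun u => -(spin (u i) * spin (u j))) fun u => by
        simp [spin_add_one, Ne.symm hij]
    rw [sum_neg_distrib] at h
    linarith

lemma sum_sq_sum_spin [DecidableEq ι] :
    ∑ u : ι → ZMod 2, (∑ i, spin (u i)) ^ 2 = Fintype.card ι * 2 ^ Fintype.card ι := by
  simp_rw [sq, Fintype.sum_mul_sum]
  rw [sum_comm]
  simp_rw [sum_comm (s := univ (α := ι → ZMod 2)), sum_spin_mul_spin]
  simp

lemma sum_sq_card_sub_two_mul_hammingNorm [DecidableEq ι] :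
    ∑ u : ι → ZMod 2, ((Fintype.card ι : ℝ) - 2 * hammingNorm u) ^ 2 =
      (Fintype.card ι * 2 ^ Fintype.card ι : ℝ) := by
  simp_rw [← sum_spin, sum_sq_sum_spin]

end HammingCube

lemma mul_one_sub_sq_div_sq_le_rpow {q a N w : ℝ} (hq : 0 ≤ q) (ha : 0 < a) (haN : a ≤ N)
    (hw : 0 ≤ w) : ((N - a) / 2) ^ q * (1 - (N - 2 * w) ^ 2 / a ^ 2) ≤ w ^ q := by
  have hNa : 0 ≤ (N - a) / 2 := by linarith
  by_cases hwa : (N - 2 * w) ^ 2 < a ^ 2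
  · have hfac : 1 - (N - 2 * w) ^ 2 / a ^ 2 ≤ 1 := by
      have := div_nonneg (sq_nonneg (N - 2 * w)) (sq_nonneg a)
      linarith
    have hw' : (N - a) / 2 ≤ w := by nlinarith [abs_lt_of_sq_lt_sq' hwa ha.le]
    calc ((N - a) / 2) ^ q * (1 - (N - 2 * w) ^ 2 / a ^ 2) ≤ ((N - a) / 2) ^ q :=
          mul_le_of_le_one_right (Real.rpow_nonneg hNa q) hfac
      _ ≤ w ^ q := Real.rpow_le_rpow hNa hw' hq
  · have hfac : 1 - (N - 2 * w) ^ 2 / a ^ 2 ≤ 0 := by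
      rw [sub_nonpos, one_le_div (by positivity)]
      linarith
    exact (mul_nonpos_of_nonneg_of_nonpos (Real.rpow_nonneg hNa q) hfac).trans
      (Real.rpow_nonneg hw q)

lemma rpow_mul_two_pow_mul_one_sub_le_sum_rpow_hammingNorm {ι : Type*} [Fintype ι]
    [DecidableEq ι] {q a : ℝ} (hq : 0 ≤ q) (ha : 0 < a) (haN : a ≤ Fintype.card ι) :
    ((Fintype.card ι - a) / 2) ^ q * (2 ^ Fintype.card ι * (1 - Fintype.card ι / a ^ 2)) ≤
      ∑ u : ι → ZMod 2, (hammingNorm u : ℝ) ^ q := by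
  set N : ℝ := (Fintype.card ι : ℝ)
  calc ((N - a) / 2) ^ q * (2 ^ Fintype.card ι * (1 - N / a ^ 2))
      = ∑ u : ι → ZMod 2, ((N - a) / 2) ^ q * (1 - (N - 2 * hammingNorm u) ^ 2 / a ^ 2) := by
        rw [← mul_sum, sum_sub_distrib, ← sum_div, sum_sq_card_sub_two_mul_hammingNorm]
        simp only [sum_const, card_univ, Fintype.card_fun, ZMod.card, nsmul_eq_mul]
        push_cast
        ring
    _ ≤ ∑ u : ι → ZMod 2, (hammingNorm u : ℝ) ^ q :=
        sum_le_sum fun u _ => mul_one_sub_sq_div_sq_le_rpow hq ha haN (Nat.cast_nonneg _)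

lemma four_rpow_lt_two {q : ℝ} (hq : q < 1 / 2) : (4 : ℝ) ^ q < 2 := by
  calc (4 : ℝ) ^ q < 4 ^ (1 / 2 : ℝ) := Real.rpow_lt_rpow_of_exponent_lt (by norm_num) hq
    _ = 2 := by
      rw [show (4 : ℝ) = 2 ^ (2 : ℝ) by norm_num, ← Real.rpow_mul (by norm_num)]
      norm_num

lemma exists_two_pow_mul_rpow_lt_two_mul_sum_rpow_hammingNorm {q : ℝ} (hq0 : 0 ≤ q)
    (hq : q < 1 / 2) : ∃ N : ℕ, 0 < N ∧
      2 ^ N * (2 * N : ℝ) ^ q < 2 * ∑ u : Fin N → ZMod 2, (hammingNorm u : ℝ) ^ q := by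
  have h4q := four_rpow_lt_two hq
  obtain ⟨k, hk⟩ := exists_nat_gt (4 / (2 - (4 : ℝ) ^ q))
  have hk4 : 4 < k * (2 - (4 : ℝ) ^ q) := by rwa [div_lt_iff₀ (by linarith)] at hk
  have hk2 : (2 : ℝ) < k := by nlinarith [Real.rpow_nonneg (show (0 : ℝ) ≤ 4 by norm_num) q]
  have h4qk : (4 : ℝ) ^ q < 2 * (1 - 1 / k) ^ 2 := by
    have : 4 / (k : ℝ) < 2 - 4 ^ q := by rw [div_lt_iff₀ (by linarith)]; linarith
    have : 0 < 2 / (k : ℝ) ^ 2 := by positivity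
    have e : 2 * (1 - 1 / (k : ℝ)) ^ 2 = 2 - 4 / k + 2 / k ^ 2 := by field_simp; ring
    linarith
  -- `N = k³`, and Chebyshev's inequality is applied to the window `|N - 2‖u‖| < k²`.
  refine ⟨k ^ 3, by exact_mod_cast pow_pos (by linarith : (0 : ℝ) < k) 3, ?_⟩
  have hS := rpow_mul_two_pow_mul_one_sub_le_sum_rpow_hammingNorm (ι := Fin (k ^ 3)) hq0
    (a := k ^ 2) (by positivity) (by simp only [Fintype.card_fin, Nat.cast_pow]; nlinarith)
  simp only [Fintype.card_fin, Nat.cast_pow] at hS ⊢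
  set K : ℝ := ((k : ℝ) ^ 3 / 2) ^ q
  have hK : 0 < K := by positivity
  have hc : 0 ≤ 1 - 1 / (k : ℝ) := by rw [sub_nonneg, div_le_one] <;> linarith
  have h2N : (2 * (k : ℝ) ^ 3) ^ q = 4 ^ q * K := by
    rw [← Real.mul_rpow (by norm_num) (by positivity)]
    ring_nf
  have hm : K * (1 - 1 / k) ≤ (((k : ℝ) ^ 3 - k ^ 2) / 2) ^ q := by
    rw [show ((k : ℝ) ^ 3 - k ^ 2) / 2 = (k ^ 3 / 2) * (1 - 1 / k) by field_simp,
      Real.mul_rpow (by positivity) hc]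
    exact mul_le_mul_of_nonneg_left
      (Real.self_le_rpow_of_le_one hc (by linarith [one_div_pos.2 (by linarith : (0:ℝ) < k)])
        (by linarith)) hK.le
  have hfac : 1 - (k : ℝ) ^ 3 / (k ^ 2) ^ 2 = 1 - 1 / k := by field_simp
  rw [hfac] at hS
  calc (2 : ℝ) ^ k ^ 3 * (2 * (k : ℝ) ^ 3) ^ q = 2 ^ k ^ 3 * 4 ^ q * K := by rw [h2N]; ring
    _ < 2 ^ k ^ 3 * (2 * (1 - 1 / k) ^ 2) * K := by gcongr
    _ = 2 * ((K * (1 - 1 / k)) * (2 ^ k ^ 3 * (1 - 1 / k))) := by ring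
    _ ≤ 2 * ((((k : ℝ) ^ 3 - k ^ 2) / 2) ^ q * (2 ^ k ^ 3 * (1 - 1 / k))) := by gcongr
    _ ≤ _ := by gcongr

/-- `h` says that the quotient matrix `!![α, c |κ|; c |ι|, δ]` of this equitable partition is
singular; a kernel vector of it, spread out constantly over the blocks, is one of the big matrix. -/
theorem Matrix.det_fromBlocks_of_sum_row_eq_zero {ι κ R : Type*} [Fintype ι] [Fintype κ]
    [DecidableEq ι] [DecidableEq κ] [CommRing R] [IsDomain R] [Nonempty ι]
    (A : Matrix ι ι R) (D : Matrix κ κ R) {α δ c : R} (hA : ∀ i, ∑ j, A i j = α)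
    (hD : ∀ k, ∑ l, D k l = δ) (hc : c * Fintype.card κ ≠ 0)
    (h : α * δ = c ^ 2 * (Fintype.card ι * Fintype.card κ)) :
    (Matrix.fromBlocks A (.of fun _ _ => c) (.of fun _ _ => c) D).det = 0 := by
  rw [← Matrix.exists_mulVec_eq_zero_iff]
  refine ⟨Sum.elim (fun _ => c * Fintype.card κ) (fun _ => -α), fun hv => hc ?_, ?_⟩
  · simpa using congrFun hv (.inl (Classical.arbitrary ι))
  · ext (i | k)
    · simp [Matrix.mulVec, dotProduct, ← sum_mul, hA]
      ring
    · simp [Matrix.mulVec, dotProduct, ← sum_mul, hD]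
      linear_combination -h

lemma exists_pos_mul_mul_self_eq_sq {p a b c : ℝ} (hp : 0 < p) (hb : 0 < b) (hc : 0 < c)
    (h : b * (2 * c) ^ (1 / p) < a) :
    ∃ t, 0 < t ∧ a * (t * a) = (b * (c + c * t ^ p) ^ (1 / p)) ^ 2 := by
  set f : ℝ → ℝ := fun t => a * (t * a) - (b * (c + c * t ^ p) ^ (1 / p)) ^ 2
  have hf : Continuous f := by
    have := Real.continuous_rpow_const hp.le
    have := Real.continuous_rpow_const (one_div_pos.2 hp).le
    fun_prop
  have hf0 : f 0 < 0 := by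
    have : 0 < b * c ^ (1 / p) := by positivity
    simp only [f, Real.zero_rpow hp.ne', mul_zero, zero_mul, add_zero]
    nlinarith
  have hf1 : 0 < f 1 := by
    have : 0 ≤ b * (2 * c) ^ (1 / p) := by positivity
    simp only [f, Real.one_rpow, mul_one, one_mul, ← two_mul]
    nlinarith
  obtain ⟨t, ⟨ht0, -⟩, ht⟩ := intermediate_value_Icc zero_le_one hf.continuousOn ⟨hf0.le, hf1.le⟩
  refine ⟨t, lt_of_le_of_ne ht0 ?_, sub_eq_zero.1 ht⟩
  rintro rfl
  exact hf0.ne ht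

lemma pNorm_append_sub_append {m n : ℕ} (p : ℝ) (x x' : Fin m → ℝ) (y y' : Fin n → ℝ) :
    pNorm p (Fin.append x y - Fin.append x' y') =
      (∑ k, |x k - x' k| ^ p + ∑ k, |y k - y' k| ^ p) ^ (1 / p) := by
  simp [pNorm, Fin.sum_univ_add]

lemma rpow_mul_rpow_inv {p s n : ℝ} (hp : p ≠ 0) (hs : 0 ≤ s) (hn : 0 ≤ n) :
    (s ^ p * n) ^ p⁻¹ = s * n ^ p⁻¹ := by
  rw [Real.mul_rpow (Real.rpow_nonneg hs p) hn, Real.rpow_rpow_inv hs hp]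

section Cube

variable {ι : Type*}

def cubeVertex (s : ℝ) (u : ι → ZMod 2) : ι → ℝ := fun i => s * spin (u i)

lemma cubeVertex_injective {s : ℝ} (hs : s ≠ 0) : Function.Injective (cubeVertex (ι := ι) s) :=
  fun _ _ h => funext fun i => spin_injective (mul_left_cancel₀ hs (congrFun h i))

variable [Fintype ι]

lemma sum_abs_cubeVertex_rpow (p s : ℝ) (u : ι → ZMod 2) :
    ∑ i, |cubeVertex s u i| ^ p = Fintype.card ι * |s| ^ p := by
  simp [cubeVertex, abs_mul, abs_spin]

lemma sum_abs_cubeVertex_sub_rpow {p : ℝ} (hp : p ≠ 0) (s : ℝ) (u v : ι → ZMod 2) :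
    ∑ i, |cubeVertex s u i - cubeVertex s v i| ^ p = (2 * |s|) ^ p * hammingDist u v := by
  simp_rw [cubeVertex, ← mul_sub, abs_mul, Real.mul_rpow (abs_nonneg _) (abs_nonneg _),
    abs_spin_sub_spin_rpow hp, ← mul_sum, sum_ite, sum_const_zero, zero_add, sum_const,
    nsmul_eq_mul, Real.mul_rpow zero_le_two (abs_nonneg s)]
  simp only [hammingDist, ne_eq]
  ring

end Cube

def twoCubes (N : ℕ) (t : ℝ) : (Fin N → ZMod 2) ⊕ (Fin N → ZMod 2) → Fin (N + N) → ℝ :=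
  Sum.elim (fun u => Fin.append (cubeVertex 1 u) 0) (fun w => Fin.append 0 (cubeVertex t w))

lemma twoCubes_injective {N : ℕ} (hN : 0 < N) {t : ℝ} (ht : t ≠ 0) :
    Function.Injective (twoCubes N t) := by
  have h0 (u w : Fin N → ZMod 2) : Fin.append (cubeVertex 1 u) 0 ≠ Fin.append 0 (cubeVertex t w) :=
    fun h => spin_ne_zero (u ⟨0, hN⟩) <| by
      simpa only [Fin.append_left, cubeVertex, one_mul, Pi.zero_apply]
        using congrFun h (Fin.castAdd N ⟨0, hN⟩)
  rintro (u | w) (v | w') h <;> simp only [twoCubes, Sum.elim_inl, Sum.elim_inr] at h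
  · exact congrArg _ <| cubeVertex_injective one_ne_zero <| funext fun i => by
      simpa only [Fin.append_left] using congrFun h (Fin.castAdd N i)
  · exact absurd h (h0 u w')
  · exact absurd h.symm (h0 v w)
  · exact congrArg _ <| cubeVertex_injective ht <| funext fun i => by
      simpa only [Fin.append_right] using congrFun h (Fin.natAdd N i)

lemma distMatrix_twoCubes {N : ℕ} {p : ℝ} (hp : 0 < p) {t : ℝ} (ht : 0 < t) :
    Matrix.of (fun a b => pNorm p (twoCubes N t a - twoCubes N t b)) =
      Matrix.fromBlocks (.of fun u v => 2 * (hammingDist u v : ℝ) ^ (1 / p))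
        (.of fun _ _ => (N + N * t ^ p) ^ (1 / p)) (.of fun _ _ => (N + N * t ^ p) ^ (1 / p))
        (.of fun u v => 2 * t * (hammingDist u v : ℝ) ^ (1 / p)) := by
  ext (u | w) (v | w') <;>
    simp [twoCubes, pNorm_append_sub_append, sum_abs_cubeVertex_sub_rpow hp.ne',
      sum_abs_cubeVertex_rpow, Real.zero_rpow hp.ne', abs_of_pos ht, rpow_mul_rpow_inv hp.ne',
      ht.le]

theorem stmt8 (p : ℝ) (hp : 2 < p) :
    ∃ (d n : ℕ), 0 < d ∧ 2 ≤ n ∧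
      ∃ x : Fin n → (Fin d → ℝ), Function.Injective x ∧
        (Matrix.of fun i j => pNorm p (x i - x j)).det = 0 := by
  have hp0 : 0 < p := by linarith
  obtain ⟨N, hN, hS⟩ := exists_two_pow_mul_rpow_lt_two_mul_sum_rpow_hammingNorm
    (one_div_pos.2 hp0).le ((one_div_lt_one_div hp0 two_pos).2 hp)
  set S := ∑ u : Fin N → ZMod 2, (hammingNorm u : ℝ) ^ (1 / p)
  obtain ⟨t, ht, hroot⟩ := exists_pos_mul_mul_self_eq_sq hp0 (by positivity)
    (by exact_mod_cast hN) hS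
  have hrow (s : ℝ) (u : Fin N → ZMod 2) : ∑ v, s * (hammingDist u v : ℝ) ^ (1 / p) = s * S := by
    rw [← mul_sum, sum_hammingDist_left (fun n => (n : ℝ) ^ (1 / p))]
  have hdet : (Matrix.of fun a b => pNorm p (twoCubes N t a - twoCubes N t b)).det = 0 := by
    rw [distMatrix_twoCubes hp0 ht]
    refine Matrix.det_fromBlocks_of_sum_row_eq_zero _ _ (α := 2 * S) (δ := t * (2 * S))
      (fun u => hrow 2 u) (fun w => (hrow (2 * t) w).trans (by ring)) (by positivity) ?_
    simp only [Fintype.card_fun, ZMod.card, Fintype.card_fin]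
    push_cast
    linear_combination hroot
  let e := Fintype.equivFin ((Fin N → ZMod 2) ⊕ (Fin N → ZMod 2))
  refine ⟨N + N, _, by omega, ?_, twoCubes N t ∘ e.symm,
    (twoCubes_injective hN ht.ne').comp e.symm.injective, ?_⟩
  · have := Fintype.card_pos (α := Fin N → ZMod 2)
    rw [Fintype.card_sum]
    omega
  · rw [← hdet, ← Matrix.det_reindex_self e]
    rfl
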